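/- arXiv:2302.07991 — 2 statements merged into one kernel-verified Lean document; each statement's English description precedes it below -/
import Mathlib

section
/- Let (A, m) be a two-dimensional Gorenstein Noetherian local ring, I an m-primary ideal, and Q a parameter ideal with Q ⊆ I, I² = Q·I, and I = Q : I (i.e. I is a good ideal). Then ℓ_A(A/Q) = 2·ℓ_A(A/I); equivalently, the multiplicity satisfies e₀(I) = 2·ℓ_A(A/I). -/
open IsLocalRing

/-- The length of an `A`-module, as the Krull dimension of its lattice of submodules. -/
noncomputable def modLength (A M : Type*) [CommRing A] [AddCommGroup M] [Module A M] :
    WithBot ℕ∞ :=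
  Order.krullDim (Submodule A M)

/-- `Q` is a parameter ideal of the local ring `A` of dimension `d`: it is generated by a
system of `d` parameters, i.e. by `d` elements, with `A ⧸ Q` of finite length. -/
def IsParameterIdeal (A : Type*) [CommRing A] [IsLocalRing A] (d : ℕ) (Q : Ideal A) : Prop :=
  ∃ s : Finset A, s.card = d ∧ Ideal.span (s : Set A) = Q ∧ IsFiniteLength A (A ⧸ Q)

/-- A Noetherian local ring `A` of dimension `d` is Gorenstein iff the Artinian quotient
`A ⧸ Q` by any parameter ideal `Q` is self-injective (i.e. an Artinian Gorenstein ring). -/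
def IsGorensteinLocalRing (A : Type*) [CommRing A] [IsLocalRing A] (d : ℕ) : Prop :=
  IsNoetherianRing A ∧ ringKrullDim A = d ∧
    ∀ Q : Ideal A, IsParameterIdeal A d Q → Module.Injective (A ⧸ Q) (A ⧸ Q)

/-!
Work in the Artinian local ring `R = A ⧸ Q`, which is self-injective. Since `Hom_R(-, R)` is
exact, `ℓ(Hom_R(M, R)) = ℓ(Hom_R(k, R)) · ℓ(M)` for every `M` of finite length, by induction
along a composition series; for `M = R` this forces `ℓ(Hom_R(k, R)) = 1`. Hence
`ℓ(ann J) = ℓ(Hom_R(R ⧸ J, R)) = ℓ(R ⧸ J)` for every ideal `J`. For `J = I ⧸ Q` the condition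
`I = Q : I` says exactly `ann J = J`, so `ℓ(A ⧸ Q) = ℓ(J) + ℓ(R ⧸ J) = 2 ℓ(A ⧸ I)`.
-/

universe u

theorem modLength_eq_length (R M : Type*) [CommRing R] [AddCommGroup M] [Module R M] :
    modLength R M = Module.length R M :=
  (Module.coe_length R M).symm

theorem ENat.eq_one_of_mul_eq_self {a b : ℕ∞} (h : a * b = b) (hb₀ : b ≠ 0) (hb : b ≠ ⊤) :
    a = 1 := by
  lift b to ℕ using hb
  induction a using ENat.recTopCoe with
  | top => simp [ENat.top_mul hb₀] at h
  | coe a =>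
    norm_cast at h ⊢
    exact (Nat.mul_eq_right (by exact_mod_cast hb₀)).mp h

theorem Submodule.length_eq_add_length_quotient {R M : Type*} [Ring R] [AddCommGroup M]
    [Module R M] (P : Submodule R M) :
    Module.length R M = Module.length R P + Module.length R (M ⧸ P) :=
  Module.length_eq_add_of_exact P.subtype P.mkQ P.injective_subtype P.mkQ_surjective
    (LinearMap.exact_subtype_mkQ P)

section LinearMapLength

variable {R : Type u} [CommRing R] {M E : Type u} [AddCommGroup M] [Module R M]
  [AddCommGroup E] [Module R E] [Module.Injective R E]

theorem Module.length_linearMap_eq_add (P : Submodule R M) :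
    Module.length R (M →ₗ[R] E) =
      Module.length R ((M ⧸ P) →ₗ[R] E) + Module.length R (P →ₗ[R] E) := by
  refine Module.length_eq_add_of_exact (LinearMap.lcomp R E P.mkQ) (LinearMap.lcomp R E P.subtype)
    (LinearMap.lcomp_injective_of_surjective _ P.mkQ_surjective) (fun g ↦ ?_)
    (LinearMap.exact_lcomp_of_exact_of_surjective E (LinearMap.exact_subtype_mkQ P)
      P.mkQ_surjective)
  obtain ⟨h, hh⟩ := Module.Injective.out P.subtype P.injective_subtype g
  exact ⟨h, LinearMap.ext hh⟩

theorem Module.length_linearMap_eq_mul [IsLocalRing R] (hM : IsFiniteLength R M) :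
    Module.length R (M →ₗ[R] E) =
      Module.length R ((R ⧸ maximalIdeal R) →ₗ[R] E) * Module.length R M := by
  induction hM with
  | @of_subsingleton N _ _ _ =>
    rw [Module.length_eq_zero (M := N), Module.length_eq_zero (M := N →ₗ[R] E), mul_zero]
  | @of_simple_quotient M _ _ P _ _ ih =>
    obtain ⟨m, hm, ⟨e⟩⟩ := isSimpleModule_iff_quot_maximal.mp ‹IsSimpleModule R (M ⧸ P)›
    obtain rfl := IsLocalRing.eq_maximalIdeal hm
    rw [Module.length_linearMap_eq_add P, ih, (e.arrowCongr (LinearEquiv.refl R E)).length_eq,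
      P.length_eq_add_length_quotient, Module.length_eq_one (R := R) (M := M ⧸ P), mul_add,
      mul_one, add_comm]

end LinearMapLength

section Annihilator

variable {R : Type*} [CommRing R]

theorem Ideal.map_ringLmapEquivSelf_dualAnnihilator (J : Ideal R) :
    J.dualAnnihilator.map (LinearMap.ringLmapEquivSelf R R R).toLinearMap = J.annihilator := by
  ext x
  simp [Submodule.map_equiv_eq_comap_symm, Submodule.mem_dualAnnihilator,
    Submodule.mem_annihilator, mul_comm]

def Ideal.dualQuotEquivAnnihilator (J : Ideal R) :
    Module.Dual R (R ⧸ J) ≃ₗ[R] J.annihilator :=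
  J.dualQuotEquivDualAnnihilator ≪≫ₗ (LinearMap.ringLmapEquivSelf R R R).submoduleMap _ ≪≫ₗ
    LinearEquiv.ofEq _ _ (Ideal.map_ringLmapEquivSelf_dualAnnihilator J)

theorem Ideal.annihilator_map_mk (Q I : Ideal R) :
    (I.map (Ideal.Quotient.mk Q)).annihilator = (Q.colon I).map (Ideal.Quotient.mk Q) := by
  ext x
  obtain ⟨a, rfl⟩ := Ideal.Quotient.mk_surjective x
  rw [Ideal.mem_quotient_iff_mem Ideal.le_colon, Submodule.mem_annihilator, Submodule.mem_colon]
  simp [Ideal.mem_map_iff_of_surjective _ Ideal.Quotient.mk_surjective, ← map_mul,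
    Ideal.Quotient.eq_zero_iff_mem]

end Annihilator

section SelfInjective

variable {R : Type u} [CommRing R] [IsLocalRing R] [IsArtinianRing R] [Module.Injective R R]

theorem Module.length_dual_residueField :
    Module.length R ((R ⧸ maximalIdeal R) →ₗ[R] R) = 1 := by
  have hR : IsFiniteLength R R :=
    isFiniteLength_iff_isNoetherian_isArtinian.mpr ⟨inferInstance, inferInstance⟩
  have h := Module.length_linearMap_eq_mul (E := R) hR
  rw [(LinearMap.ringLmapEquivSelf R R R).length_eq] at h
  exact ENat.eq_one_of_mul_eq_self h.symm Module.length_pos.ne' Module.length_ne_top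

theorem Module.length_dual {M : Type u} [AddCommGroup M] [Module R M] (hM : IsFiniteLength R M) :
    Module.length R (Module.Dual R M) = Module.length R M := by
  rw [Module.length_linearMap_eq_mul hM, Module.length_dual_residueField, one_mul]

theorem Ideal.length_annihilator (J : Ideal R) :
    Module.length R J.annihilator = Module.length R (R ⧸ J) :=
  J.dualQuotEquivAnnihilator.length_eq.symm.trans <| Module.length_dual <|
    isFiniteLength_iff_isNoetherian_isArtinian.mpr ⟨inferInstance, inferInstance⟩

end SelfInjective

theorem stmt_12_general (A : Type*) [CommRing A] [IsLocalRing A]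
    (hA : IsGorensteinLocalRing A 2)
    (I : Ideal A) (hI : I.radical = maximalIdeal A)
    (Q : Ideal A) (hQ : IsParameterIdeal A 2 Q) (hQI : Q ≤ I)
    (hgood : I = Q.colon I) :
    modLength A (A ⧸ Q) = 2 * modLength A (A ⧸ I) := by
  obtain ⟨-, -, hGor⟩ := hA
  have hQ_ne_top : Q ≠ ⊤ := fun h ↦ (maximalIdeal.isMaximal A).ne_top <| by
    rw [← hI, show I = ⊤ from top_le_iff.mp (h ▸ hQI), Ideal.radical_top]
  have : Nontrivial (A ⧸ Q) := Ideal.Quotient.nontrivial_iff.mpr hQ_ne_top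
  have : IsLocalRing (A ⧸ Q) := .of_surjective' _ Ideal.Quotient.mk_surjective
  have : Module.Injective (A ⧸ Q) (A ⧸ Q) := hGor Q hQ
  have hAQ : Module.length A (A ⧸ Q) = Module.length (A ⧸ Q) (A ⧸ Q) :=
    Module.length_eq_of_surjective Ideal.Quotient.mk_surjective
  obtain ⟨-, -, -, hQ_fin⟩ := hQ
  have : IsArtinianRing (A ⧸ Q) := (isFiniteLength_iff_isNoetherian_isArtinian.mp
    (Module.length_ne_top_iff.mp (hAQ ▸ Module.length_ne_top_iff.mpr hQ_fin))).2
  set J := I.map (Ideal.Quotient.mk Q)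
  have hAJ : Module.length A ((A ⧸ Q) ⧸ J) = Module.length (A ⧸ Q) ((A ⧸ Q) ⧸ J) :=
    Module.length_eq_of_surjective Ideal.Quotient.mk_surjective
  have hAI : Module.length A (A ⧸ I) = Module.length (A ⧸ Q) ((A ⧸ Q) ⧸ J) :=
    (DoubleQuot.quotQuotEquivQuotOfLEₐ A hQI).toLinearEquiv.length_eq.symm.trans hAJ
  have hJ : J.annihilator = J := by rw [Ideal.annihilator_map_mk, ← hgood]
  rw [modLength_eq_length, modLength_eq_length, hAQ, hAI, J.length_eq_add_length_quotient,
    ← hJ, Ideal.length_annihilator, hJ, two_mul]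
  norm_cast

/-- For a good ideal `I` (i.e. `I² = QI` and `I = Q : I` for a parameter ideal `Q ⊆ I`) in a
two-dimensional Gorenstein Noetherian local ring, `ℓ_A(A/Q) = 2·ℓ_A(A/I)`; equivalently the
multiplicity satisfies `e₀(I) = 2·ℓ_A(A/I)`. -/
theorem stmt_12 (A : Type*) [CommRing A] [IsLocalRing A]
    (hA : IsGorensteinLocalRing A 2)
    (I : Ideal A) (hI : I.radical = maximalIdeal A)
    (Q : Ideal A) (hQ : IsParameterIdeal A 2 Q) (hQI : Q ≤ I)
    (hsq : I ^ 2 = Q * I) (hgood : I = Q.colon I) :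
    modLength A (A ⧸ Q) = 2 * modLength A (A ⧸ I) :=
  stmt_12_general A hA I hI Q hQ hQI hgood
end

section
/- Let (A, m) be a Noetherian local ring, I an m-primary ideal, Q ⊆ I an ideal, and suppose the filtration F_n = \overline{Iⁿ} (a multiplicative filtration with F_0 = A, F_1 = I, F_m·F_n ⊆ F_{m+n}) satisfies: for all n ≥ r, Q ∩ F_{n+1} = Q·F_n. If F_{r+1} = Q·F_r, then F_{n+1} = Q·F_n for all n ≥ r. -/
theorem stmt_14_general {A : Type*} [CommRing A] (Q : Ideal A) (F : ℕ → Ideal A) (hanti : Antitone F)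
    (r : ℕ) (hVV : ∀ n, r ≤ n → Q ⊓ F (n + 1) = Q * F n)
    (hr : F (r + 1) = Q * F r) :
    ∀ n, r ≤ n → F (n + 1) = Q * F n := by
  intro n hn
  have hle : F (n + 1) ≤ Q :=
    calc F (n + 1) ≤ F (r + 1) := hanti (by omega)
      _ = Q * F r := hr
      _ ≤ Q := Ideal.mul_le_left
  rw [← hVV n hn, inf_eq_right.mpr hle]

/-- If the multiplicative decreasing filtration `F` (with `F 0 = A`, `F 1 = I`)
satisfies the Valabrega–Valla type condition `Q ⊓ F (n+1) = Q * F n` for all `n ≥ r`,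
then `F (r+1) = Q * F r` propagates: `F (n+1) = Q * F n` for all `n ≥ r`. -/
theorem stmt_14 {A : Type*} [CommRing A] [IsLocalRing A] [IsNoetherianRing A]
    (I Q : Ideal A) (hQI : Q ≤ I)
    (hI : I.radical = IsLocalRing.maximalIdeal A)
    (F : ℕ → Ideal A) (hF0 : F 0 = ⊤) (hF1 : F 1 = I)
    (hmul : ∀ m n, F m * F n ≤ F (m + n)) (hanti : Antitone F)
    (r : ℕ) (hVV : ∀ n, r ≤ n → Q ⊓ F (n + 1) = Q * F n)
    (hr : F (r + 1) = Q * F r) :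
    ∀ n, r ≤ n → F (n + 1) = Q * F n :=
  stmt_14_general Q F hanti r hVV hr
end
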